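/- Characterization underlying spherical clustering. Let K ≥ 2, r ≥ 2, and (z, S, θ) ∈ P with angle gap Δ_min > 0 (Assumption 1), and let X be the mean tensor of the symmetric dTBM. Then for all i, j ∈ [p]: Mat(X)_{i:}^s = Mat(X)_{j:}^s if and only if z(i) = z(j); i.e., two nodes share the same normalized mean row exactly when they belong to the same community. -/

import Mathlib

open scoped BigOperators
open scoped Classical

noncomputable section

/-- Normalization `v^s := v/‖v‖`, with the convention `0^s = 0`. -/
def nzd {ι : Type*} [Fintype ι] (v : EuclideanSpace ℝ ι) : EuclideanSpace ℝ ι :=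
  ‖v‖⁻¹ • v

/-- The `a`-th row of the mode-`k` matricization of an order-`K` tensor. -/
def matRow {K d : ℕ} (T : (Fin K → Fin d) → ℝ) (k : Fin K) (a : Fin d) :
    EuclideanSpace ℝ ({i : Fin K // i ≠ k} → Fin d) :=
  WithLp.toLp 2 fun j => T fun i => if h : i = k then a else j ⟨i, h⟩

/-- Mean tensor of the symmetric order-`K` dTBM:
`X(i₁,…,i_K) = S(z(i₁),…,z(i_K)) · ∏_k θ(i_k)`. -/
def meanTensor {K p r : ℕ} (z : Fin p → Fin r) (S : (Fin K → Fin r) → ℝ)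
    (θ : Fin p → ℝ) : (Fin K → Fin p) → ℝ :=
  fun i => S (fun k => z (i k)) * ∏ k, θ (i k)

/-- Parameter space `P` with constants `c₁, c₂, c₃, c₄` (mode-1 matricization rows
taken at the index `k0`). -/
def inP {K p r : ℕ} (k0 : Fin K) (c1 c2 c3 c4 : ℝ)
    (z : Fin p → Fin r) (S : (Fin K → Fin r) → ℝ) (θ : Fin p → ℝ) : Prop :=
  (∀ i, 0 < θ i) ∧
  (∀ a : Fin r,
      c1 * p / r ≤ ((Finset.univ.filter (fun i => z i = a)).card : ℝ) ∧
      ((Finset.univ.filter (fun i => z i = a)).card : ℝ) ≤ c2 * p / r) ∧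
  (∀ a : Fin r, c3 ≤ ‖matRow S k0 a‖ ∧ ‖matRow S k0 a‖ ≤ c4) ∧
  (∀ a : Fin r,
      ∑ i ∈ Finset.univ.filter (fun i => z i = a), θ i
        = ((Finset.univ.filter (fun i => z i = a)).card : ℝ))

/-- Angle gap `Δ_min(S) = min_{a ≠ b} ‖Mat(S)_{a:}^s − Mat(S)_{b:}^s‖`. -/
def angleGap {K d : ℕ} (k0 : Fin K) (S : (Fin K → Fin d) → ℝ) : ℝ :=
  sInf {x | ∃ a b : Fin d, a ≠ b ∧ x = ‖nzd (matRow S k0 a) - nzd (matRow S k0 b)‖}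

lemma nzd_smul {ι : Type*} [Fintype ι] {c : ℝ} (hc : 0 < c) (v : EuclideanSpace ℝ ι) :
    nzd (c • v) = nzd v := by
  unfold nzd
  rw [norm_smul, smul_smul, Real.norm_eq_abs, abs_of_pos hc, mul_inv,
    mul_comm c⁻¹, mul_assoc, inv_mul_cancel₀ hc.ne', mul_one]

/-- Characterization underlying spherical clustering.  Under the
parameter space `P` and the angle-gap assumption `Δ_min > 0`, two nodes share the same
normalized mean-tensor row exactly when they belong to the same community. -/
theorem spherical_clustering_characterization {K p r : ℕ} (hK : 2 ≤ K) (hr : 2 ≤ r)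
    (k0 : Fin K) (hk0 : (k0 : ℕ) = 0)
    (c1 c2 c3 c4 : ℝ) (hc1 : 0 < c1) (hc2 : 0 < c2) (hc3 : 0 < c3) (hc4 : 0 < c4)
    (z : Fin p → Fin r) (S : (Fin K → Fin r) → ℝ) (θ : Fin p → ℝ)
    (hP : inP k0 c1 c2 c3 c4 z S θ)
    (hgap : 0 < angleGap k0 S)
    (i j : Fin p) :
    nzd (matRow (meanTensor z S θ) k0 i) = nzd (matRow (meanTensor z S θ) k0 j)
      ↔ z i = z j := by
  classical
  obtain ⟨hθ, hcard, hS, hsum⟩ := hP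
  have hp : 0 < p := i.pos
  have hrR : (0 : ℝ) < r := by
    have : 0 < r := lt_of_lt_of_le (by norm_num) hr
    exact_mod_cast this
  -- surjectivity of z
  have hsurj : ∀ a : Fin r, ∃ i0 : Fin p, z i0 = a := by
    intro a
    have h1 := (hcard a).1
    have hpos : (0 : ℝ) < c1 * p / r := by
      apply div_pos (mul_pos hc1 _) hrR
      exact_mod_cast hp
    have hne : (Finset.univ.filter (fun i0 => z i0 = a)).card ≠ 0 := by
      intro h0
      rw [h0] at h1
      norm_num at h1
      linarith
    obtain ⟨i0, hi0⟩ := Finset.card_pos.mp (Nat.pos_of_ne_zero hne)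
    exact ⟨i0, (Finset.mem_filter.mp hi0).2⟩
  set ι := {k : Fin K // k ≠ k0} with hι
  have zinv : ∀ a : Fin r, {i0 : Fin p // z i0 = a} := fun a =>
    ⟨(hsurj a).choose, (hsurj a).choose_spec⟩
  set w : (ι → Fin p) → ℝ := fun jj => ∏ k, θ (jj k) with hwdef
  have hw : ∀ jj, 0 < w jj := fun jj => Finset.prod_pos fun k _ => hθ (jj k)
  set V : Fin r → EuclideanSpace ℝ (ι → Fin p) :=
    fun a => WithLp.toLp 2 (fun jj => matRow S k0 a (fun k => z (jj k)) * w jj) with hVdef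
  -- lift of an index function along z
  set lift : (ι → Fin r) → (ι → Fin p) := fun jj' k => (zinv (jj' k)).1 with hliftdef
  have hlift : ∀ jj', (fun k => z (lift jj' k)) = jj' := by
    intro jj'; funext k; exact (zinv (jj' k)).2
  -- the key row factorization
  have hrow : ∀ i0 : Fin p, matRow (meanTensor z S θ) k0 i0 = θ i0 • V (z i0) := by
    intro i0
    ext jj
    have hprod : (∏ k : Fin K, θ (if h : k = k0 then i0 else jj ⟨k, h⟩))
        = θ i0 * ∏ k : ι, θ (jj k) := by
      rw [← Finset.mul_prod_erase Finset.univ _ (Finset.mem_univ k0), dif_pos rfl]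
      congr 1
      rw [Finset.prod_subtype (Finset.univ.erase k0)
        (p := fun x => x ≠ k0) (fun x => by simp)
        (fun k => θ (if h : k = k0 then i0 else jj ⟨k, h⟩))]
      exact Finset.prod_congr rfl fun k _ => by rw [dif_neg k.2]
    show meanTensor z S θ (fun k => if h : k = k0 then i0 else jj ⟨k, h⟩)
        = θ i0 * (matRow S k0 (z i0) (fun k => z (jj k)) * w jj)
    unfold meanTensor matRow
    simp only [apply_dite z]
    rw [hprod]
    ring
  have hnzd : ∀ i0 : Fin p,
      nzd (matRow (meanTensor z S θ) k0 i0) = nzd (V (z i0)) := by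
    intro i0; rw [hrow i0, nzd_smul (hθ i0)]
  rw [hnzd i, hnzd j]
  constructor
  · intro h
    by_contra hab
    set a := z i
    set b := z j
    -- rows of S are nonzero
    have hu : ∀ c : Fin r, matRow S k0 c ≠ 0 := by
      intro c h0
      have := (hS c).1
      rw [h0, norm_zero] at this
      linarith
    -- V c is nonzero
    have hVne : ∀ c : Fin r, V c ≠ 0 := by
      intro c hc0
      apply hu c
      ext jj'
      have h1 : V c (lift jj') = 0 := by rw [hc0]; rfl
      have h2 : matRow S k0 c (fun k => z (lift jj' k)) * w (lift jj') = 0 := h1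
      rw [hlift jj'] at h2
      have := (hw (lift jj')).ne'
      show matRow S k0 c jj' = 0
      rcases mul_eq_zero.mp h2 with h3 | h3
      · exact h3
      · exact absurd h3 this
    have hna : ‖V a‖ ≠ 0 := fun h0 => hVne a (norm_eq_zero.mp h0)
    have hnb : ‖V b‖ ≠ 0 := fun h0 => hVne b (norm_eq_zero.mp h0)
    set t : ℝ := ‖V a‖ * ‖V b‖⁻¹ with htdef
    have ht : 0 < t := by
      apply mul_pos
      · exact lt_of_le_of_ne (norm_nonneg _) (Ne.symm hna)
      · exact inv_pos.mpr (lt_of_le_of_ne (norm_nonneg _) (Ne.symm hnb))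
    have h2 : V a = t • V b := by
      have h3 : ‖V a‖ • nzd (V a) = ‖V a‖ • nzd (V b) := by rw [h]
      unfold nzd at h3
      rw [smul_smul, smul_smul, mul_inv_cancel₀ hna, one_smul] at h3
      rw [h3, htdef, mul_smul]
    -- pointwise consequence on rows of S
    have h3 : ∀ jj' : ι → Fin r, matRow S k0 a jj' = t * matRow S k0 b jj' := by
      intro jj'
      have h4 : V a (lift jj') = t * V b (lift jj') := by
        rw [h2]; rfl
      have h5 : matRow S k0 a (fun k => z (lift jj' k)) * w (lift jj')
          = t * (matRow S k0 b (fun k => z (lift jj' k)) * w (lift jj')) := h4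
      rw [hlift jj'] at h5
      have hwne := (hw (lift jj')).ne'
      apply mul_right_cancel₀ hwne
      rw [h5]; ring
    have hueq : matRow S k0 a = t • matRow S k0 b := by
      ext jj'
      show matRow S k0 a jj' = t * matRow S k0 b jj'
      exact h3 jj'
    have heqn : nzd (matRow S k0 a) = nzd (matRow S k0 b) := by
      rw [hueq, nzd_smul ht]
    have hmem : ‖nzd (matRow S k0 a) - nzd (matRow S k0 b)‖ ∈
        {x | ∃ a' b' : Fin r, a' ≠ b' ∧
          x = ‖nzd (matRow S k0 a') - nzd (matRow S k0 b')‖} := ⟨a, b, hab, rfl⟩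
    have hbdd : BddBelow {x | ∃ a' b' : Fin r, a' ≠ b' ∧
        x = ‖nzd (matRow S k0 a') - nzd (matRow S k0 b')‖} := by
      refine ⟨0, fun x hx => ?_⟩
      obtain ⟨a', b', _, hx⟩ := hx
      rw [hx]; exact norm_nonneg _
    have hle : angleGap k0 S ≤ ‖nzd (matRow S k0 a) - nzd (matRow S k0 b)‖ :=
      csInf_le hbdd hmem
    rw [heqn, sub_self, norm_zero] at hle
    linarith
  · intro h
    rw [h]
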